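/- Let d ≥ 1, s an integer with 1 ≤ s ≤ d, η > 0 and T ≥ 1. For every sequence ℓ_1,…,ℓ_T of s-sparse loss vectors in [0,1]^d, the Exponential Weight Algorithm with parameter −η guarantees R_T ≤ (log d)/(1 − e^{−η}) + (e^{η} − 1) · Ts / (2d). -/

import Mathlib

/-!
With `c = 1 - e^{-η}` and cumulative losses `L_t`, the potential `W_t = ∑_j exp(-η L_t^{(j)})`
satisfies `W_{t+1} ≤ W_t (1 - c⟨ℓ_t, x_t⟩) ≤ W_t exp(-c⟨ℓ_t, x_t⟩)`, because on `[0,1]` the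
convex function `z ↦ e^{-ηz}` lies below its chord. As `W_0 = d` and `W_T ≥ exp(-η L_T^{(i)})`,
this gives `c ∑_t ⟨ℓ_t, x_t⟩ ≤ log d + η L_T^{(i)}` for every expert `i`, i.e.
`R_T ≤ log d / c + (η / c - 1) min_i L_T^{(i)}`. Sparsity enters only through
`min_i L_T^{(i)} ≤ (1/d) ∑_i L_T^{(i)} ≤ Ts/d`, and `η / c - 1 ≤ (e^η - 1)/2` is `η ≤ sinh η`.
-/

open Finset Filter MeasureTheory ProbabilityTheory Real

noncomputable section

/-- Number of nonzero coordinates of a vector in `ℝ^d`. -/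
def supp0 {d : ℕ} (w : Fin d → ℝ) : ℕ := Set.ncard {i | w i ≠ 0}

/-- A vector is `s`-sparse if at most `s` of its coordinates are nonzero. -/
def IsSparse {d : ℕ} (s : ℕ) (w : Fin d → ℝ) : Prop := supp0 w ≤ s

/-- All coordinates lie in `[0,1]`. -/
def InCube {d : ℕ} (w : Fin d → ℝ) : Prop := ∀ i, w i ∈ Set.Icc (0:ℝ) 1

/-- A full-information strategy is valid if it always plays a point of the simplex `Δ_d`. -/
def IsStrategy {d : ℕ} (σ : ∀ t : ℕ, (Fin t → (Fin d → ℝ)) → (Fin d → ℝ)) : Prop :=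
  ∀ t h, (∀ i, 0 ≤ σ t h i) ∧ ∑ i, σ t h i = 1

/-- The mixed action played at stage `t` against the sequence `ω` of outcome vectors. -/
def play {d : ℕ} (σ : ∀ t : ℕ, (Fin t → (Fin d → ℝ)) → (Fin d → ℝ))
    (ω : ℕ → Fin d → ℝ) (t : ℕ) : Fin d → ℝ := σ t fun k => ω k

/-- Regret after `T` stages when outcomes are losses. -/
def lossRegret {d : ℕ} (σ : ∀ t : ℕ, (Fin t → (Fin d → ℝ)) → (Fin d → ℝ))
    (ℓ : ℕ → Fin d → ℝ) (T : ℕ) : ℝ :=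
  (∑ t ∈ Finset.range T, ∑ i, ℓ t i * play σ ℓ t i) -
    ⨅ i, ∑ t ∈ Finset.range T, ℓ t i

/-- The Exponential Weight Algorithm with parameter `-η`, viewed as a full-information
strategy: `x_t^{(i)} ∝ exp(-η ∑_{k<t} ℓ_k^{(i)})`. -/
def ewa (d : ℕ) (η : ℝ) : ∀ t : ℕ, (Fin t → (Fin d → ℝ)) → (Fin d → ℝ) :=
  fun t h i => Real.exp (-η * ∑ k : Fin t, h k i) / ∑ j, Real.exp (-η * ∑ k : Fin t, h k j)

lemma exp_neg_mul_le_one_sub_mul (η : ℝ) {z : ℝ} (hz0 : 0 ≤ z) (hz1 : z ≤ 1) :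
    exp (-η * z) ≤ 1 - (1 - exp (-η)) * z := by
  calc exp (-η * z) = exp ((1 - z) • 0 + z • -η) := by simp [mul_comm]
    _ ≤ (1 - z) • exp 0 + z • exp (-η) :=
        convexOn_exp.2 (Set.mem_univ _) (Set.mem_univ _) (sub_nonneg.2 hz1) hz0 (by ring)
    _ = 1 - (1 - exp (-η)) * z := by simp only [smul_eq_mul, exp_zero]; ring

lemma one_sub_exp_neg_pos {η : ℝ} (hη : 0 < η) : 0 < 1 - exp (-η) :=
  sub_pos.2 (exp_lt_one_iff.2 (neg_lt_zero.2 hη))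

lemma div_one_sub_exp_neg_le {η : ℝ} (hη : 0 < η) :
    η / (1 - exp (-η)) ≤ (exp η + 1) / 2 := by
  have hsinh : η ≤ (exp η - exp (-η)) / 2 := sinh_eq η ▸ self_le_sinh_iff.2 hη.le
  have hinv : exp η * exp (-η) = 1 := by rw [← exp_add, add_neg_cancel, exp_zero]
  rw [div_le_iff₀ (one_sub_exp_neg_pos hη)]
  linear_combination hsinh + hinv / 2

lemma sum_le_of_inCube_of_isSparse {d s : ℕ} {w : Fin d → ℝ} (hcube : InCube w)
    (hsparse : IsSparse s w) : ∑ i, w i ≤ s := by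
  classical
  have hcard : (univ.filter fun i => w i ≠ 0).card ≤ s := by
    simpa [IsSparse, supp0, Set.ncard_eq_toFinset_card'] using hsparse
  calc ∑ i, w i = ∑ i ∈ univ.filter fun i => w i ≠ 0, w i := (sum_filter_ne_zero _).symm
    _ ≤ ∑ i ∈ univ.filter fun i => w i ≠ 0, 1 := sum_le_sum fun i _ => (hcube i).2
    _ ≤ s := by simpa using hcard

section Potential

variable {d : ℕ} (η : ℝ) (ℓ : ℕ → Fin d → ℝ)

def cumLoss (t : ℕ) (i : Fin d) : ℝ := ∑ k ∈ range t, ℓ k i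

lemma cumLoss_succ (t : ℕ) (i : Fin d) : cumLoss ℓ (t + 1) i = cumLoss ℓ t i + ℓ t i :=
  sum_range_succ _ _

lemma cumLoss_nonneg (hℓ : ∀ t, InCube (ℓ t)) (t : ℕ) (i : Fin d) : 0 ≤ cumLoss ℓ t i :=
  sum_nonneg fun k _ => (hℓ k i).1

def ewaPotential (t : ℕ) : ℝ := ∑ j, exp (-η * cumLoss ℓ t j)

def ewaLoss (t : ℕ) : ℝ := ∑ i, ℓ t i * play (ewa d η) ℓ t i

lemma play_ewa (t : ℕ) (i : Fin d) :
    play (ewa d η) ℓ t i = exp (-η * cumLoss ℓ t i) / ewaPotential η ℓ t := by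
  have hfin (j : Fin d) : ∑ k : Fin t, ℓ k j = cumLoss ℓ t j :=
    Fin.sum_univ_eq_sum_range (ℓ · j) t
  simp only [play, ewa, ewaPotential, hfin]

variable [NeZero d]

lemma ewaPotential_pos (t : ℕ) : 0 < ewaPotential η ℓ t :=
  sum_pos (fun _ _ => exp_pos _) univ_nonempty

lemma isStrategy_ewa : IsStrategy (ewa d η) := by
  intro t h
  have hpos : 0 < ∑ j, exp (-η * ∑ k : Fin t, h k j) :=
    sum_pos (fun _ _ => exp_pos _) univ_nonempty
  exact ⟨fun i => by unfold ewa; positivity, by simp only [ewa, ← sum_div, div_self hpos.ne']⟩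

lemma ewaPotential_succ_le {t : ℕ} (hℓ : InCube (ℓ t)) :
    ewaPotential η ℓ (t + 1) ≤
      ewaPotential η ℓ t * exp (-((1 - exp (-η)) * ewaLoss η ℓ t)) := by
  have hweight (j : Fin d) :
      exp (-η * cumLoss ℓ t j) = ewaPotential η ℓ t * play (ewa d η) ℓ t j := by
    rw [play_ewa, mul_div_cancel₀ _ (ewaPotential_pos η ℓ t).ne']
  set W := ewaPotential η ℓ t
  set x := play (ewa d η) ℓ t
  have hx : ∑ j, x j = 1 := (isStrategy_ewa η t _).2
  calc ewaPotential η ℓ (t + 1) = ∑ j, W * x j * exp (-η * ℓ t j) := by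
        simp only [ewaPotential, cumLoss_succ, mul_add, exp_add, hweight]
    _ ≤ ∑ j, W * x j * (1 - (1 - exp (-η)) * ℓ t j) := by
        gcongr with j
        · exact mul_nonneg (ewaPotential_pos η ℓ t).le ((isStrategy_ewa η t _).1 j)
        · exact exp_neg_mul_le_one_sub_mul η (hℓ j).1 (hℓ j).2
    _ = W * (1 - (1 - exp (-η)) * ewaLoss η ℓ t) := by
        simp only [ewaLoss, mul_sub, mul_one, sum_sub_distrib, ← mul_sum, hx]
        congr 1
        simp only [mul_sum]
        exact sum_congr rfl fun j _ => by ring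
    _ ≤ W * exp (-((1 - exp (-η)) * ewaLoss η ℓ t)) := by
        gcongr
        · exact (ewaPotential_pos η ℓ t).le
        · linarith [add_one_le_exp (-((1 - exp (-η)) * ewaLoss η ℓ t))]

lemma ewaPotential_le (hℓ : ∀ t, InCube (ℓ t)) (T : ℕ) :
    ewaPotential η ℓ T ≤ d * exp (-((1 - exp (-η)) * ∑ t ∈ range T, ewaLoss η ℓ t)) := by
  induction T with
  | zero => simp [ewaPotential, cumLoss]
  | succ T ih =>
    calc ewaPotential η ℓ (T + 1)
        ≤ ewaPotential η ℓ T * exp (-((1 - exp (-η)) * ewaLoss η ℓ T)) :=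
          ewaPotential_succ_le η ℓ (hℓ T)
      _ ≤ d * exp (-((1 - exp (-η)) * ∑ t ∈ range T, ewaLoss η ℓ t)) *
            exp (-((1 - exp (-η)) * ewaLoss η ℓ T)) := by gcongr
      _ = d * exp (-((1 - exp (-η)) * ∑ t ∈ range (T + 1), ewaLoss η ℓ t)) := by
          rw [mul_assoc, ← exp_add, sum_range_succ]; ring_nf

lemma mul_sum_ewaLoss_le (hℓ : ∀ t, InCube (ℓ t)) (T : ℕ) (i : Fin d) :
    (1 - exp (-η)) * ∑ t ∈ range T, ewaLoss η ℓ t ≤ log d + η * cumLoss ℓ T i := by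
  have hd : (0 : ℝ) < d := Nat.cast_pos.2 (NeZero.pos d)
  have h := log_le_log (exp_pos _) <|
    (single_le_sum (f := fun j => exp (-η * cumLoss ℓ T j)) (fun j _ => (exp_pos _).le)
      (mem_univ i)).trans (ewaPotential_le η ℓ hℓ T)
  rw [log_exp, log_mul hd.ne' (exp_pos _).ne', log_exp] at h
  linarith

lemma lossRegret_ewa_le (hη : 0 < η) (hℓ : ∀ t, InCube (ℓ t)) (T : ℕ) :
    lossRegret (ewa d η) ℓ T ≤
      log d / (1 - exp (-η)) + (η / (1 - exp (-η)) - 1) * ⨅ i, cumLoss ℓ T i := by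
  obtain ⟨i, hi⟩ := exists_eq_ciInf_of_finite (f := cumLoss ℓ T)
  have hc := one_sub_exp_neg_pos hη
  have hrhs : log d / (1 - exp (-η)) + (η / (1 - exp (-η)) - 1) * cumLoss ℓ T i =
      (log d + η * cumLoss ℓ T i) / (1 - exp (-η)) - cumLoss ℓ T i := by
    field_simp; ring
  change (∑ t ∈ range T, ewaLoss η ℓ t) - ⨅ i, cumLoss ℓ T i ≤ _
  rw [← hi, hrhs]
  exact sub_le_sub_right ((le_div_iff₀' hc).2 (mul_sum_ewaLoss_le η ℓ hℓ T i)) _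

lemma iInf_cumLoss_le_of_isSparse {s : ℕ} (hℓ : ∀ t, InCube (ℓ t) ∧ IsSparse s (ℓ t)) (T : ℕ) :
    ⨅ i, cumLoss ℓ T i ≤ T * s / d := by
  rw [le_div_iff₀' (Nat.cast_pos.2 (NeZero.pos d))]
  calc d * ⨅ i, cumLoss ℓ T i ≤ ∑ i, cumLoss ℓ T i := by
        simpa using card_nsmul_le_sum univ (cumLoss ℓ T) _
          fun i _ => ciInf_le (Set.finite_range _).bddBelow i
    _ = ∑ t ∈ range T, ∑ i, ℓ t i := sum_comm
    _ ≤ ∑ t ∈ range T, (s : ℝ) :=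
        sum_le_sum fun t _ => sum_le_of_inCube_of_isSparse (hℓ t).1 (hℓ t).2
    _ = T * s := by simp

end Potential

theorem ewa_sparse_loss_bound_general (d s T : ℕ) (hd : 1 ≤ d) (η : ℝ) (hη : 0 < η)
    (ℓ : ℕ → Fin d → ℝ) (hℓ : ∀ t, InCube (ℓ t) ∧ IsSparse s (ℓ t)) :
    lossRegret (ewa d η) ℓ T ≤
      Real.log d / (1 - Real.exp (-η)) + (Real.exp η - 1) * T * s / (2 * d) := by
  have : NeZero d := ⟨by omega⟩
  have hcube t : InCube (ℓ t) := (hℓ t).1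
  have hcoef : η / (1 - exp (-η)) - 1 ≤ (exp η - 1) / 2 := by
    linarith [div_one_sub_exp_neg_le hη]
  calc lossRegret (ewa d η) ℓ T
      ≤ log d / (1 - exp (-η)) + (η / (1 - exp (-η)) - 1) * ⨅ i, cumLoss ℓ T i :=
        lossRegret_ewa_le η ℓ hη hcube T
    _ ≤ log d / (1 - exp (-η)) + (exp η - 1) / 2 * (T * s / d) := by
        gcongr
        · exact le_ciInf (cumLoss_nonneg ℓ hcube T)
        · linarith [add_one_le_exp η]
        · exact iInf_cumLoss_le_of_isSparse ℓ hℓ T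
    _ = log d / (1 - exp (-η)) + (exp η - 1) * T * s / (2 * d) := by ring

/-- For `s`-sparse losses in `[0,1]^d`, the Exponential Weight Algorithm
with parameter `-η` guarantees `R_T ≤ log d/(1-e^{-η}) + (e^η - 1) Ts/(2d)`. -/
theorem ewa_sparse_loss_bound (d s T : ℕ) (hd : 1 ≤ d) (hs1 : 1 ≤ s) (hsd : s ≤ d)
    (hT : 1 ≤ T) (η : ℝ) (hη : 0 < η)
    (ℓ : ℕ → Fin d → ℝ) (hℓ : ∀ t, InCube (ℓ t) ∧ IsSparse s (ℓ t)) :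
    lossRegret (ewa d η) ℓ T ≤
      Real.log d / (1 - Real.exp (-η)) + (Real.exp η - 1) * T * s / (2 * d) :=
  ewa_sparse_loss_bound_general d s T hd η hη ℓ hℓ

end
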